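/- arXiv:1911.07307 — 3 statements merged into one kernel-verified Lean document; each statement's English description precedes it below -/
import Mathlib

section
/- Let β < 1 and let f : [0,∞) → ℝ be a bounded continuous function. Then lim_{r→0⁺} ∫_{{w ∈ ℂ : 0 < |w| < 1}} f(log|w| / log r) · |w|^{−2β} dλ(w) = (π/(1−β)) · f(0), where λ denotes the Lebesgue measure on ℂ identified with ℝ². -/
/-!
In polar coordinates, followed by the substitution `‖w‖ = exp x`, the integral becomes
`2π ∫_{x<0} exp((2 - 2β) x) f(x / log r) dx`. As `r → 0⁺` we have `log r → -∞`, so the integrand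
tends pointwise to `exp((2 - 2β) x) f 0`, under the integrable bound `C exp((2 - 2β) x)` (here
`β < 1` is used); dominated convergence gives `2π f 0 / (2 - 2β)`.
-/

open MeasureTheory Set Filter Topology Real

theorem setIntegral_fun_norm_preimage_complex {E : Type*} [NormedAddCommGroup E]
    [NormedSpace ℝ E] (g : ℝ → E) {s : Set ℝ} (hs : MeasurableSet s) (hs0 : s ⊆ Ioi 0) :
    ∫ w in (fun w : ℂ ↦ ‖w‖) ⁻¹' s, g ‖w‖ = (2 * π) • ∫ y in s, y • g y := by
  have hradial : ((fun w : ℂ ↦ ‖w‖) ⁻¹' s).indicator (fun w ↦ g ‖w‖)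
      = fun w ↦ s.indicator g ‖w‖ :=
    funext fun _ ↦ indicator_comp_right (fun w : ℂ ↦ ‖w‖)
  have hball : volume.real (Metric.ball (0 : ℂ) 1) = π := by
    simp [Measure.real, Complex.volume_ball]
  have hintegrand : (Ioi 0).indicator (fun y ↦ y ^ (2 - 1) • s.indicator g y)
      = s.indicator (fun y ↦ y • g y) := by
    ext y
    by_cases hy : y ∈ s
    · simp [hy, hs0 hy]
    · simp [hy]
  rw [← integral_indicator (hs.preimage continuous_norm.measurable), hradial,
    integral_fun_norm_addHaar volume, Complex.finrank_real_complex, hball,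
    ← integral_indicator measurableSet_Ioi, ← integral_indicator hs, hintegrand, mul_smul,
    ofNat_smul_eq_nsmul (R := ℝ)]

theorem integral_comp_exp_Iio {E : Type*} [NormedAddCommGroup E] [NormedSpace ℝ E]
    (g : ℝ → E) (a : ℝ) :
    ∫ x in Iio a, exp x • g (exp x) = ∫ y in Ioo 0 (exp a), g y := by
  symm
  rw [← image_exp_Iio]
  simpa [abs_of_pos (exp_pos _)] using integral_image_eq_integral_abs_deriv_smul
      (measurableSet_Iio (a := a)) (fun x _ ↦ (hasDerivAt_exp x).hasDerivWithinAt)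
      (fun x _ y _ hxy ↦ exp_injective hxy) g

theorem setIntegral_punctured_unitDisc_comp_log_norm_mul_rpow (g : ℝ → ℝ) (β : ℝ) :
    ∫ w in {w : ℂ | 0 < ‖w‖ ∧ ‖w‖ < 1}, g (log ‖w‖) * ‖w‖ ^ (-2 * β)
      = 2 * π * ∫ x in Iio 0, exp ((2 - 2 * β) * x) * g x := by
  have hexp (x : ℝ) :
      exp x * (exp x * (g x * exp x ^ (-2 * β))) = exp ((2 - 2 * β) * x) * g x := by
    rw [← exp_mul, show (2 - 2 * β) * x = x + (x + x * (-2 * β)) by ring, exp_add, exp_add]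
    ring
  rw [show {w : ℂ | 0 < ‖w‖ ∧ ‖w‖ < 1} = (fun w : ℂ ↦ ‖w‖) ⁻¹' Ioo 0 1 from rfl,
    setIntegral_fun_norm_preimage_complex (fun y ↦ g (log y) * y ^ (-2 * β)) measurableSet_Ioo
      Ioo_subset_Ioi_self, ← exp_zero, ← integral_comp_exp_Iio]
  simp only [smul_eq_mul, log_exp, hexp]

theorem tendsto_setIntegral_exp_mul_comp_div_log {a : ℝ} (ha : 0 < a) {f : ℝ → ℝ}
    (hf : Continuous f) {C : ℝ} (hC : ∀ x, |f x| ≤ C) :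
    Tendsto (fun r ↦ ∫ x in Iio 0, exp (a * x) * f (x / log r)) (𝓝[>] 0) (𝓝 (f 0 / a)) := by
  have hlimit : ∫ x in Iio 0, exp (a * x) * f 0 = f 0 / a := by
    rw [integral_mul_const, ← integral_Iic_eq_integral_Iio, integral_exp_mul_Iic ha, mul_zero,
      exp_zero, one_div_mul_eq_div]
  rw [← hlimit]
  refine tendsto_integral_filter_of_dominated_convergence (fun x ↦ exp (a * x) * C)
    (.of_forall fun r ↦ ?_) (.of_forall fun r ↦ .of_forall fun x ↦ ?_)
    ((integrableOn_exp_mul_Iic ha 0).mono_set Iio_subset_Iic_self |>.mul_const C)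
    (.of_forall fun x ↦ ?_)
  · fun_prop
  · rw [norm_mul, norm_of_nonneg (exp_pos _).le, norm_eq_abs]
    exact mul_le_mul_of_nonneg_left (hC _) (exp_pos _).le
  · exact ((hf.tendsto 0).comp
      (tendsto_const_nhds.div_atBot tendsto_log_nhdsGT_zero)).const_mul _

/-- For `β < 1` and `f` bounded continuous (on `[0,∞)`):
`lim_{r→0⁺} ∫_{0<|w|<1} f(log|w|/log r)·|w|^{−2β} dλ(w) = (π/(1−β))·f(0)`. -/
theorem stmt6 (β : ℝ) (hβ : β < 1) (f : ℝ → ℝ) (hf : Continuous f)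
    (hbd : ∃ C : ℝ, ∀ x, |f x| ≤ C) :
    Filter.Tendsto (fun r : ℝ =>
        ∫ w in {w : ℂ | 0 < ‖w‖ ∧ ‖w‖ < 1},
          f (Real.log (‖w‖) / Real.log r) * ‖w‖ ^ (-2 * β) ∂volume)
      (nhdsWithin 0 (Set.Ioi 0)) (nhds (Real.pi / (1 - β) * f 0)) := by
  obtain ⟨C, hC⟩ := hbd
  have hlim := (tendsto_setIntegral_exp_mul_comp_div_log (a := 2 - 2 * β) (by linarith) hf
    hC).const_mul (2 * π)
  rw [funext fun r ↦ setIntegral_punctured_unitDisc_comp_log_norm_mul_rpow (f <| · / log r) β]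
  convert hlim using 2
  field_simp
end

section
/- Let p ≥ 1, let κ₁, …, κ_p ≥ 0, let S = {i : κᵢ > 0} with m = #S, and let Δ_p = {u ∈ ℝ^p : uᵢ ≥ 0 for all i and Σᵢuᵢ ≤ 1}. Then lim_{s→∞} s^m · ∫_{Δ_p} exp(−s·Σᵢκᵢuᵢ) du = (Πᵢ∈S κᵢ^{−1}) / (p−m)!. -/
/-!
Stretching the coordinates `uᵢ` with `κᵢ > 0` by the factor `s` turns
`s ^ m * ∫_Δ exp (-s ⟨κ, u⟩) du` into the integral of `exp (-⟨κ, v⟩)` over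
`{v ≥ 0 | s⁻¹ ∑_{κᵢ > 0} vᵢ + ∑_{κᵢ = 0} vᵢ ≤ 1}`. These regions lie in the cylinder
`{v ≥ 0 | ∑_{κᵢ = 0} vᵢ ≤ 1}` and eventually agree with it off the null hyperplane
`∑_{κᵢ = 0} vᵢ = 1`, so dominated convergence gives the integral over the cylinder. That integral
splits as `∏_{κᵢ > 0} ∫_0^∞ exp (-κᵢ t) dt = ∏ κᵢ⁻¹` times the volume `1 / (p - m)!` of the
standard simplex in the remaining `p - m` coordinates.
-/

open MeasureTheory Set Filter
open scoped Classical Topology Nat Finset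

section Simplex

variable (ι : Type*) [Fintype ι]

def solidSimplex (t : ℝ) : Set (ι → ℝ) := {x | (∀ i, 0 ≤ x i) ∧ ∑ i, x i ≤ t}

variable {ι}

lemma measurableSet_solidSimplex (t : ℝ) : MeasurableSet (solidSimplex ι t) := by
  simp only [solidSimplex, ofPred_and, ofPred_forall]
  exact .inter (.iInter fun i => measurableSet_le measurable_const (measurable_pi_apply i))
    (measurableSet_le (Finset.measurable_sum _ fun i _ => measurable_pi_apply i) measurable_const)

lemma solidSimplex_eq_empty {t : ℝ} (ht : t < 0) : solidSimplex ι t = ∅ :=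
  eq_empty_of_forall_notMem fun _ hx =>
    (Finset.sum_nonneg fun i _ => hx.1 i).not_gt (hx.2.trans_lt ht)

lemma integral_Icc_sub_pow_div_factorial (n : ℕ) {t : ℝ} (ht : 0 ≤ t) :
    ∫ a in Icc 0 t, (t - a) ^ n / n ! = t ^ (n + 1) / (n + 1)! := by
  rw [integral_Icc_eq_integral_Ioc, ← intervalIntegral.integral_of_le ht,
    intervalIntegral.integral_div, intervalIntegral.integral_comp_sub_left (· ^ n),
    integral_pow, Nat.factorial_succ]
  push_cast
  field_simp
  ring

lemma volume_solidSimplex_fin_succ (n : ℕ) (t : ℝ) :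
    volume (solidSimplex (Fin (n + 1)) t) =
      ∫⁻ a in Icc 0 t, volume (solidSimplex (Fin n) (t - a)) := by
  set B : Set (ℝ × (Fin n → ℝ)) := {q | 0 ≤ q.1 ∧ (∀ i, 0 ≤ q.2 i) ∧ q.1 + ∑ i, q.2 i ≤ t}
  have hB : MeasurableSet B := by
    simp only [B, ofPred_and, ofPred_forall]
    exact (measurableSet_le measurable_const measurable_fst).inter <|
      (MeasurableSet.iInter fun i => measurableSet_le measurable_const measurable_snd.eval).inter
        (measurableSet_le (measurable_fst.add <| Finset.measurable_sum _ fun i _ =>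
          measurable_snd.eval) measurable_const)
  have hvol : volume (solidSimplex (Fin (n + 1)) t) = volume.prod volume B := by
    have hpre : MeasurableEquiv.piFinSuccAbove (fun _ => ℝ) 0 ⁻¹' B =
        solidSimplex (Fin (n + 1)) t := by
      ext x
      simp only [B, solidSimplex, mem_preimage, mem_ofPred_eq,
        MeasurableEquiv.piFinSuccAbove_apply, Fin.insertNthEquiv, Equiv.coe_fn_symm_mk,
        Fin.removeNth_zero, Fin.tail, Fin.forall_fin_succ, Fin.sum_univ_succ]
      tauto
    rw [← hpre]
    exact (measurePreserving_piFinSuccAbove (fun _ => volume) 0).measure_preimage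
      hB.nullMeasurableSet
  have hslice : (fun a => volume (Prod.mk a ⁻¹' B)) =
      (Icc 0 t).indicator fun a => volume (solidSimplex (Fin n) (t - a)) := by
    ext a
    by_cases ha : 0 ≤ a
    · have : Prod.mk a ⁻¹' B = solidSimplex (Fin n) (t - a) := by
        ext
        simp [B, solidSimplex, ha, le_sub_iff_add_le']
      by_cases hat : a ≤ t
      · rw [this, indicator_of_mem (mem_Icc.2 ⟨ha, hat⟩)]
      · rw [this, solidSimplex_eq_empty (by linarith), indicator_of_notMem (by simp [hat]),
          measure_empty]
    · have : Prod.mk a ⁻¹' B = ∅ := by ext; simp [B, ha]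
      simp [this, ha]
  rw [hvol, Measure.prod_apply hB, hslice, lintegral_indicator measurableSet_Icc]

lemma volume_solidSimplex_fin (n : ℕ) {t : ℝ} (ht : 0 ≤ t) :
    volume (solidSimplex (Fin n) t) = ENNReal.ofReal (t ^ n / n !) := by
  induction n generalizing t with
  | zero =>
    have : solidSimplex (Fin 0) t = univ := by ext x; simp [solidSimplex, ht]
    simp [this, volume_pi]
  | succ n ih =>
    rw [volume_solidSimplex_fin_succ, setLIntegral_congr_fun measurableSet_Icc
      fun a ha => ih (sub_nonneg.2 ha.2), ← integral_Icc_sub_pow_div_factorial n ht,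
      ofReal_integral_eq_lintegral_ofReal]
    · exact ContinuousOn.integrableOn_compact isCompact_Icc (by fun_prop)
    · filter_upwards [ae_restrict_mem measurableSet_Icc] with a ha
      have := sub_nonneg.2 ha.2
      positivity

variable (ι)

lemma volume_solidSimplex {t : ℝ} (ht : 0 ≤ t) :
    volume (solidSimplex ι t) =
      ENNReal.ofReal (t ^ Fintype.card ι / (Fintype.card ι)!) := by
  let e := MeasurableEquiv.piCongrLeft (fun _ : ι => ℝ) (Fintype.equivFin ι).symm
  have hpre : e ⁻¹' solidSimplex ι t = solidSimplex (Fin (Fintype.card ι)) t := by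
    ext x
    simp only [solidSimplex, mem_preimage, mem_ofPred_eq, e, MeasurableEquiv.coe_piCongrLeft,
      ← (Fintype.equivFin ι).symm.forall_congr_right, ← (Fintype.equivFin ι).symm.sum_comp,
      Equiv.piCongrLeft_apply_apply]
  rw [← volume_solidSimplex_fin _ ht, ← hpre,
    (volume_measurePreserving_piCongrLeft _ _).measure_preimage
      (measurableSet_solidSimplex t).nullMeasurableSet]

end Simplex

lemma integrableOn_Ici_exp_neg_mul {a : ℝ} (ha : 0 < a) :
    IntegrableOn (fun x => Real.exp (-(a * x))) (Ici 0) := by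
  rw [integrableOn_Ici_iff_integrableOn_Ioi]
  simpa only [neg_mul] using exp_neg_integrableOn_Ioi 0 ha

lemma integral_Ici_exp_neg_mul {a : ℝ} (ha : 0 < a) :
    ∫ x in Ici 0, Real.exp (-(a * x)) = a⁻¹ := by
  simpa only [integral_Ici_eq_integral_Ioi, mul_zero, integral_exp_neg_Ioi_zero, smul_eq_mul,
    mul_one] using integral_comp_mul_left_Ioi (fun x => Real.exp (-x)) 0 ha

section Orthant

variable {ι : Type*} [Fintype ι]

lemma exp_neg_sum_mul (κ x : ι → ℝ) :
    Real.exp (-∑ i, κ i * x i) = ∏ i, Real.exp (-(κ i * x i)) := by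
  rw [← Finset.sum_neg_distrib, Real.exp_sum]

lemma integrableOn_orthant_exp_neg_sum {κ : ι → ℝ} (hκ : ∀ i, 0 < κ i) :
    IntegrableOn (fun x : ι → ℝ => Real.exp (-∑ i, κ i * x i)) (univ.pi fun _ => Ici 0) := by
  simp only [IntegrableOn, volume_pi, Measure.restrict_pi_pi, exp_neg_sum_mul]
  exact Integrable.fintype_prod fun i => integrableOn_Ici_exp_neg_mul (hκ i)

lemma setIntegral_orthant_exp_neg_sum {κ : ι → ℝ} (hκ : ∀ i, 0 < κ i) :
    ∫ x in univ.pi (fun _ => Ici 0), Real.exp (-∑ i, κ i * x i) = ∏ i, (κ i)⁻¹ := by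
  simp only [volume_pi, Measure.restrict_pi_pi, exp_neg_sum_mul]
  exact (integral_fintype_prod_eq_prod fun i t => Real.exp (-(κ i * t))).trans <|
    Finset.prod_congr rfl fun i _ => integral_Ici_exp_neg_mul (hκ i)

end Orthant

lemma addHaar_setOf_linearMap_eq {E : Type*} [NormedAddCommGroup E] [NormedSpace ℝ E]
    [MeasurableSpace E] [BorelSpace E] [FiniteDimensional ℝ E] (μ : Measure E)
    [μ.IsAddHaarMeasure] {f : E →ₗ[ℝ] ℝ} (hf : f ≠ 0) (c : ℝ) : μ {x | f x = c} = 0 := by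
  obtain ⟨x₀, hx₀⟩ := LinearMap.surjective_of_ne_zero hf c
  have : {x | f x = c} =
      ((AffineSubspace.mk' x₀ (LinearMap.ker f) : AffineSubspace ℝ E) : Set E) := by
    ext x
    simp [AffineSubspace.mem_mk', sub_eq_zero, hx₀]
  rw [this]
  refine Measure.addHaar_affineSubspace μ _ fun htop => hf ?_
  rw [← LinearMap.ker_eq_top, ← AffineSubspace.direction_mk' x₀ (LinearMap.ker f), htop,
    AffineSubspace.direction_top]

lemma ae_sum_ne_one {ι : Type*} [Fintype ι] (T : Finset ι) :
    ∀ᵐ v : ι → ℝ, ∑ i ∈ T, v i ≠ 1 := by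
  rcases T.eq_empty_or_nonempty with rfl | ⟨i₀, hi₀⟩
  · simp
  let f : (ι → ℝ) →ₗ[ℝ] ℝ := ∑ i ∈ T, LinearMap.proj i
  have hf : ∀ v, f v = ∑ i ∈ T, v i := fun v => by simp [f]
  have hf0 : f ≠ 0 := fun h => by
    simpa [hf, Finset.sum_pi_single', hi₀] using LinearMap.congr_fun h (Pi.single i₀ 1)
  simpa [measure_eq_zero_iff_ae_notMem, hf] using addHaar_setOf_linearMap_eq volume hf0 1

lemma integral_comp_mul_pi {ι : Type*} [Fintype ι] {E : Type*} [NormedAddCommGroup E]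
    [NormedSpace ℝ E] {c : ι → ℝ} (hc : ∀ i, c i ≠ 0) (g : (ι → ℝ) → E) :
    ∫ v : ι → ℝ, g (fun i => c i * v i) = |∏ i, c i|⁻¹ • ∫ u, g u := by
  have hdet : LinearMap.det (Matrix.toLin' (Matrix.diagonal c)) = ∏ i, c i := by
    rw [LinearMap.det_toLin', Matrix.det_diagonal]
  have hmap := Real.map_linearMap_volume_pi_eq_smul_volume_pi
    (hdet ▸ Finset.prod_ne_zero_iff.2 fun i _ => hc i)
  have hL : ⇑(Matrix.toLin' (Matrix.diagonal c)) = fun v i => c i * v i := by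
    ext v i
    simp [Matrix.mulVec_diagonal]
  rw [hL, hdet] at hmap
  have hemb : MeasurableEmbedding fun (v : ι → ℝ) i => c i * v i :=
    (Homeomorph.piCongrRight fun i =>
      Homeomorph.mulLeft₀ (c i) (hc i)).isClosedEmbedding.measurableEmbedding
  rw [← hemb.integral_map, hmap, integral_smul_measure, ENNReal.toReal_ofReal (abs_nonneg _),
    abs_inv]

lemma eventually_inv_mul_add_le_iff {a b c : ℝ} (ha : 0 ≤ a) (hb : b ≠ c) :
    ∀ᶠ s in atTop, s⁻¹ * a + b ≤ c ↔ b ≤ c := by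
  rcases hb.lt_or_gt with hb | hb
  · have : Tendsto (fun s => s⁻¹ * a + b) atTop (𝓝 b) := by
      simpa using (tendsto_inv_atTop_zero.mul_const a).add_const b
    filter_upwards [this.eventually_lt_const hb] with s hs
    exact iff_of_true hs.le hb.le
  · filter_upwards [eventually_gt_atTop 0] with s hs
    have : 0 ≤ s⁻¹ * a := by positivity
    exact iff_of_false (by linarith) hb.not_ge

lemma tendsto_setIntegral_of_ae_eventually_mem_iff {α β E : Type*} [MeasurableSpace α]
    [NormedAddCommGroup E] [NormedSpace ℝ E] {μ : Measure α} {l : Filter β}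
    [l.IsCountablyGenerated] {A : β → Set α} {Ω : Set α} {f : α → E}
    (hA : ∀ b, MeasurableSet (A b)) (hΩ : MeasurableSet Ω) (hsub : ∀ᶠ b in l, A b ⊆ Ω)
    (hf : IntegrableOn f Ω μ) (hlim : ∀ᵐ x ∂μ, ∀ᶠ b in l, x ∈ A b ↔ x ∈ Ω) :
    Tendsto (fun b => ∫ x in A b, f x ∂μ) l (𝓝 (∫ x in Ω, f x ∂μ)) := by
  simp_rw [← integral_indicator (hA _), ← integral_indicator hΩ]
  refine tendsto_integral_filter_of_dominated_convergence (Ω.indicator fun x => ‖f x‖) ?_ ?_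
    (IntegrableOn.integrable_indicator hf.norm hΩ) ?_
  · filter_upwards [hsub] with b hb
    exact (aestronglyMeasurable_indicator_iff (hA b)).2 (hf.mono_set hb).1
  · filter_upwards [hsub] with b hb
    refine Eventually.of_forall fun x => ?_
    rw [norm_indicator_eq_indicator_norm]
    exact indicator_le_indicator_of_subset hb (fun _ => norm_nonneg _) x
  · filter_upwards [hlim] with x hx
    refine tendsto_const_nhds.congr' (hx.mono fun b hb => ?_)
    simp only [indicator, hb]

section Stretched

variable {ι : Type*} [Fintype ι] (κ : ι → ℝ)

def stretchedSimplex (s : ℝ) : Set (ι → ℝ) :=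
  {v | (∀ i, 0 ≤ v i) ∧ s⁻¹ * ∑ i with 0 < κ i, v i + ∑ i with ¬0 < κ i, v i ≤ 1}

def stretchedSimplexLimit : Set (ι → ℝ) :=
  {v | (∀ i, 0 ≤ v i) ∧ ∑ i with ¬0 < κ i, v i ≤ 1}

lemma measurableSet_stretchedSimplex (s : ℝ) : MeasurableSet (stretchedSimplex κ s) := by
  simp only [stretchedSimplex, ofPred_and, ofPred_forall]
  exact .inter (.iInter fun i => measurableSet_le measurable_const (measurable_pi_apply i))
    (measurableSet_le (by fun_prop) measurable_const)

lemma measurableSet_stretchedSimplexLimit : MeasurableSet (stretchedSimplexLimit κ) := by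
  simp only [stretchedSimplexLimit, ofPred_and, ofPred_forall]
  exact .inter (.iInter fun i => measurableSet_le measurable_const (measurable_pi_apply i))
    (measurableSet_le (by fun_prop) measurable_const)

lemma stretchedSimplex_subset_limit {s : ℝ} (hs : 0 < s) :
    stretchedSimplex κ s ⊆ stretchedSimplexLimit κ := fun v ⟨hv, hsum⟩ => by
  have : 0 ≤ s⁻¹ * ∑ i with 0 < κ i, v i := by
    have := Finset.sum_nonneg fun i (_ : i ∈ ({i | 0 < κ i} : Finset ι)) => hv i
    positivity
  exact ⟨hv, by linarith⟩

lemma eventually_mem_stretchedSimplex_iff {v : ι → ℝ} (hv : ∑ i with ¬0 < κ i, v i ≠ 1) :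
    ∀ᶠ s in atTop, v ∈ stretchedSimplex κ s ↔ v ∈ stretchedSimplexLimit κ := by
  by_cases h : ∀ i, 0 ≤ v i
  · simpa [stretchedSimplex, stretchedSimplexLimit, h] using
      eventually_inv_mul_add_le_iff (Finset.sum_nonneg fun i _ => h i) hv
  · exact .of_forall fun s => by simp [stretchedSimplex, stretchedSimplexLimit, h]

lemma pow_mul_setIntegral_solidSimplex_eq (hκ : ∀ i, 0 ≤ κ i) {s : ℝ} (hs : 0 < s) :
    s ^ #{i | 0 < κ i} * ∫ u in solidSimplex ι 1, Real.exp (-(s * ∑ i, κ i * u i)) =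
      ∫ v in stretchedSimplex κ s, Real.exp (-∑ i, κ i * v i) := by
  set c : ι → ℝ := fun i => if 0 < κ i then s⁻¹ else 1
  have hc : ∀ i, 0 < c i := fun i => by dsimp only [c]; split_ifs <;> positivity
  have hprod : |∏ i, c i| = s⁻¹ ^ #{i | 0 < κ i} := by
    rw [abs_of_pos (Finset.prod_pos fun i _ => hc i)]
    simp [c, Finset.prod_ite]
  have hsum : ∀ v : ι → ℝ, ∑ i, c i * v i =
      s⁻¹ * ∑ i with 0 < κ i, v i + ∑ i with ¬0 < κ i, v i := fun v => by
    simp only [c, ite_mul, one_mul, Finset.sum_ite, Finset.mul_sum]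
  have hpre : (fun v i => c i * v i) ⁻¹' solidSimplex ι 1 = stretchedSimplex κ s := by
    ext v
    simp only [solidSimplex, stretchedSimplex, mem_preimage, mem_ofPred_eq,
      mul_nonneg_iff_of_pos_left (hc _), hsum]
  have hexp : ∀ v : ι → ℝ, s * ∑ i, κ i * (c i * v i) = ∑ i, κ i * v i := fun v => by
    rw [Finset.mul_sum]
    refine Finset.sum_congr rfl fun i _ => ?_
    by_cases hi : 0 < κ i
    · simp only [c, if_pos hi]
      field_simp
    · simp [le_antisymm (not_lt.1 hi) (hκ i)]
  have hcomp : (fun v : ι → ℝ => Real.exp (-∑ i, κ i * v i)) =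
      (fun u => Real.exp (-(s * ∑ i, κ i * u i))) ∘ fun v i => c i * v i := by
    ext v
    simp only [Function.comp_apply, hexp]
  rw [← integral_indicator (measurableSet_solidSimplex 1),
    ← integral_indicator (measurableSet_stretchedSimplex κ s), ← hpre, ← inv_inv (s ^ _),
    ← inv_pow, ← hprod, ← smul_eq_mul, ← integral_comp_mul_pi fun i => (hc i).ne', hcomp]
  simp only [indicator_comp_right]

lemma stretchedSimplexLimit_eq_preimage :
    stretchedSimplexLimit κ =
      MeasurableEquiv.piEquivPiSubtypeProd (fun _ => ℝ) (fun i => 0 < κ i) ⁻¹'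
        ((univ.pi fun _ => Ici 0) ×ˢ solidSimplex {i // ¬0 < κ i} 1) := by
  ext v
  simp only [stretchedSimplexLimit, solidSimplex, mem_preimage, mem_prod, Set.mem_pi, mem_univ,
    true_implies, mem_Ici, mem_ofPred_eq]
  rw [Finset.sum_subtype _ (fun i => Finset.mem_filter_univ (p := fun i => ¬0 < κ i) i) v]
  constructor
  · rintro ⟨hv, hsum⟩
    exact ⟨fun i => hv i, fun i => hv i, hsum⟩
  · rintro ⟨hpos, hzero, hsum⟩
    exact ⟨fun i => if hi : 0 < κ i then hpos ⟨i, hi⟩ else hzero ⟨i, hi⟩, hsum⟩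

lemma exp_neg_sum_mul_eq_comp (hκ : ∀ i, 0 ≤ κ i) :
    (fun v : ι → ℝ => Real.exp (-∑ i, κ i * v i)) =
      (fun z : ({i // 0 < κ i} → ℝ) × ({i // ¬0 < κ i} → ℝ) =>
        Real.exp (-∑ i : {i // 0 < κ i}, κ i * z.1 i)) ∘
      MeasurableEquiv.piEquivPiSubtypeProd (fun _ => ℝ) (fun i => 0 < κ i) := by
  ext v
  rw [← Fintype.sum_subtype_add_sum_subtype (fun i => 0 < κ i), add_eq_left.2
    (Finset.sum_eq_zero fun i _ => by rw [le_antisymm (not_lt.1 i.2) (hκ i), zero_mul])]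
  rfl

lemma integrableOn_stretchedSimplexLimit (hκ : ∀ i, 0 ≤ κ i) :
    IntegrableOn (fun v => Real.exp (-∑ i, κ i * v i)) (stretchedSimplexLimit κ) := by
  rw [stretchedSimplexLimit_eq_preimage, exp_neg_sum_mul_eq_comp κ hκ]
  refine ((volume_preserving_piEquivPiSubtypeProd (fun _ => ℝ) _).integrableOn_comp_preimage
    (MeasurableEquiv.measurableEmbedding _)).2 ?_
  rw [IntegrableOn, Measure.volume_eq_prod, ← Measure.prod_restrict]
  have : IsFiniteMeasure (volume.restrict (solidSimplex {i // ¬0 < κ i} 1)) :=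
    isFiniteMeasure_restrict.2 (by simp [volume_solidSimplex])
  simpa using (integrableOn_orthant_exp_neg_sum fun i : {i // 0 < κ i} => i.2).mul_prod
    (integrable_const (1 : ℝ))

lemma setIntegral_stretchedSimplexLimit (hκ : ∀ i, 0 ≤ κ i) :
    ∫ v in stretchedSimplexLimit κ, Real.exp (-∑ i, κ i * v i) =
      (∏ i with 0 < κ i, (κ i)⁻¹) / (Fintype.card ι - #{i | 0 < κ i})! := by
  have hmp : MeasurePreserving (MeasurableEquiv.piEquivPiSubtypeProd (fun _ : ι => ℝ)
      fun i => 0 < κ i) := volume_preserving_piEquivPiSubtypeProd _ _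
  rw [stretchedSimplexLimit_eq_preimage, exp_neg_sum_mul_eq_comp κ hκ, Function.comp_def,
    hmp.setIntegral_preimage_emb (MeasurableEquiv.measurableEmbedding _)
      (fun z : ({i // 0 < κ i} → ℝ) × ({i // ¬0 < κ i} → ℝ) =>
        Real.exp (-∑ i : {i // 0 < κ i}, κ i * z.1 i)),
    Measure.volume_eq_prod]
  have := setIntegral_prod_mul
    (fun x : {i // 0 < κ i} → ℝ => Real.exp (-∑ i : {i // 0 < κ i}, κ i * x i))
    (fun _ => (1 : ℝ)) (univ.pi fun _ => Ici 0) (solidSimplex {i // ¬0 < κ i} 1)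
    (μ := volume) (ν := volume)
  simp only [mul_one] at this
  rw [this, setIntegral_orthant_exp_neg_sum fun i => i.2, setIntegral_const, smul_eq_mul, mul_one,
    measureReal_def, volume_solidSimplex _ zero_le_one, one_pow,
    ENNReal.toReal_ofReal (by positivity),
    Finset.prod_subtype _ (fun i => Finset.mem_filter_univ i) fun i => (κ i)⁻¹]
  simp only [Fintype.card_subtype_compl]
  rw [Fintype.card_subtype, ← div_eq_mul_one_div]

theorem tendsto_pow_mul_setIntegral_solidSimplex (hκ : ∀ i, 0 ≤ κ i) :
    Tendsto (fun s : ℝ => s ^ #{i | 0 < κ i} *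
        ∫ u in solidSimplex ι 1, Real.exp (-(s * ∑ i, κ i * u i))) atTop
      (𝓝 ((∏ i with 0 < κ i, (κ i)⁻¹) / (Fintype.card ι - #{i | 0 < κ i})!)) := by
  rw [← setIntegral_stretchedSimplexLimit κ hκ]
  refine (tendsto_setIntegral_of_ae_eventually_mem_iff (measurableSet_stretchedSimplex κ)
    (measurableSet_stretchedSimplexLimit κ)
    ((eventually_gt_atTop 0).mono fun _ hs => stretchedSimplex_subset_limit κ hs)
    (integrableOn_stretchedSimplexLimit κ hκ) ?_).congr' ?_
  · filter_upwards [ae_sum_ne_one _] with v hv using eventually_mem_stretchedSimplex_iff κ hv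
  · filter_upwards [eventually_gt_atTop 0] with s hs
    exact (pow_mul_setIntegral_solidSimplex_eq κ hκ hs).symm

end Stretched

theorem stmt10_general (p : ℕ) (κ : Fin p → ℝ) (hκ : ∀ i, 0 ≤ κ i) :
    Filter.Tendsto (fun s : ℝ =>
        s ^ (Finset.univ.filter fun i => 0 < κ i).card *
          ∫ u in {u : Fin p → ℝ | (∀ i, 0 ≤ u i) ∧ ∑ i, u i ≤ 1},
            Real.exp (-(s * ∑ i, κ i * u i)))
      Filter.atTop
      (nhds ((∏ i ∈ Finset.univ.filter fun i => 0 < κ i, (κ i)⁻¹) /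
        (Nat.factorial (p - (Finset.univ.filter fun i => 0 < κ i).card) : ℝ))) := by
  simpa only [Fintype.card_fin, solidSimplex] using
    tendsto_pow_mul_setIntegral_solidSimplex κ hκ

/-- Laplace-type asymptotics on the simplex: for `κᵢ ≥ 0`, `S = {i : κᵢ > 0}`,
`m = #S` and `Δ_p = {u ∈ ℝ^p_{≥0} : Σuᵢ ≤ 1}`:
`lim_{s→∞} s^m ∫_{Δ_p} exp(−s·Σκᵢuᵢ) du = (Π_{i∈S} κᵢ⁻¹)/(p−m)!`. -/
theorem stmt10 (p : ℕ) (hp : 1 ≤ p) (κ : Fin p → ℝ) (hκ : ∀ i, 0 ≤ κ i) :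
    Filter.Tendsto (fun s : ℝ =>
        s ^ (Finset.univ.filter fun i => 0 < κ i).card *
          ∫ u in {u : Fin p → ℝ | (∀ i, 0 ≤ u i) ∧ ∑ i, u i ≤ 1},
            Real.exp (-(s * ∑ i, κ i * u i)))
      Filter.atTop
      (nhds ((∏ i ∈ Finset.univ.filter fun i => 0 < κ i, (κ i)⁻¹) /
        (Nat.factorial (p - (Finset.univ.filter fun i => 0 < κ i).card) : ℝ))) :=
  stmt10_general p κ hκ
end

section
/- Let p ≥ 0 and q ≥ 0 be integers, let b₀, …, b_p be positive integers, and set b' = Σᵢ₌₀^p bᵢ. Define Φ : ℝ^{p+1} × ℝ^q → ℝ^{p+1} × ℝ^q by Φ(x₀, x₁, …, x_p, y₁, …, y_q) = (x₀, x₁+x₀, …, x_p+x₀, y₁+x₀, …, y_q+x₀). Then Φ restricts to a homeomorphism from the set {(x,y) : all coordinates ≥ 0 and b'·x₀ + Σᵢ₌₁^p bᵢxᵢ = 1} onto the set {(ξ,η) : all coordinates ≥ 0, Σᵢ₌₀^p bᵢξᵢ = 1, ξ₀ ≤ ξᵢ for all 1 ≤ i ≤ p, and ξ₀ ≤ ηⱼ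 for all 1 ≤ j ≤ q}. -/
/-!
The map `Φ` is a shear of the ambient space fixing `x₀`, so it is a homeomorphism whose inverse
subtracts `ξ₀`. Since `Φ` preserves the first coordinate, it carries the nonnegative orthant onto
the cone `ξ₀ ≥ 0, ξ₀ ≤ ξᵢ, ξ₀ ≤ ηⱼ`, and it turns the weight `Σᵢ bᵢ ξᵢ` into
`b' x₀ + Σ_{i ≥ 1} bᵢ xᵢ`; restricting `Φ` to the two regions gives the homeomorphism.
-/

open Finset

theorem sum_mul_cons_add {R : Type*} [NonUnitalNonAssocSemiring R] {n : ℕ}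
    (b : Fin (n + 1) → R) (a : R) (x : Fin n → R) :
    ∑ i, b i * (Fin.cons a fun i => x i + a : Fin (n + 1) → R) i =
      (∑ i, b i) * a + ∑ i, b i.succ * x i := by
  simp only [Fin.sum_univ_succ, Fin.cons_zero, Fin.cons_succ, mul_add, add_mul, sum_add_distrib,
    sum_mul]
  abel

section HeadShear

variable {G ι : Type*} {n : ℕ}

def headShear [AddGroup G] [TopologicalSpace G] [IsTopologicalAddGroup G] :
    (Fin (n + 1) → G) × (ι → G) ≃ₜ (Fin (n + 1) → G) × (ι → G) where
  toFun z := (Fin.cons (z.1 0) fun i => z.1 i.succ + z.1 0, fun j => z.2 j + z.1 0)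
  invFun w := (Fin.cons (w.1 0) fun i => w.1 i.succ - w.1 0, fun j => w.2 j - w.1 0)
  left_inv z := by
    ext i
    · cases i using Fin.cases <;> simp
    · simp
  right_inv w := by
    ext i
    · cases i using Fin.cases <;> simp
    · simp
  continuous_toFun := by fun_prop
  continuous_invFun := by fun_prop

variable [AddGroup G] [TopologicalSpace G] [IsTopologicalAddGroup G]
  (z : (Fin (n + 1) → G) × (ι → G))

@[simp]
theorem headShear_fst_zero : (headShear z).1 0 = z.1 0 := rfl

@[simp]
theorem headShear_fst_succ (i : Fin n) : (headShear z).1 i.succ = z.1 i.succ + z.1 0 := rfl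

@[simp]
theorem headShear_snd (j : ι) : (headShear z).2 j = z.2 j + z.1 0 := rfl

end HeadShear

theorem headShear_nonneg_iff {G ι : Type*} {n : ℕ} [AddCommGroup G] [PartialOrder G]
    [IsOrderedAddMonoid G] [TopologicalSpace G] [IsTopologicalAddGroup G]
    (z : (Fin (n + 1) → G) × (ι → G)) :
    ((∀ i, 0 ≤ z.1 i) ∧ ∀ j, 0 ≤ z.2 j) ↔
      ((∀ i, 0 ≤ (headShear z).1 i) ∧ ∀ j, 0 ≤ (headShear z).2 j) ∧
        (∀ i : Fin n, (headShear z).1 0 ≤ (headShear z).1 i.succ) ∧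
          ∀ j, (headShear z).1 0 ≤ (headShear z).2 j := by
  simp only [Fin.forall_fin_succ, headShear_fst_zero, headShear_fst_succ, headShear_snd,
    le_add_iff_nonneg_left]
  constructor
  · rintro ⟨⟨h0, hx⟩, hy⟩
    exact ⟨⟨⟨h0, fun i => add_nonneg (hx i) h0⟩, fun j => add_nonneg (hy j) h0⟩, hx, hy⟩
  · rintro ⟨⟨⟨h0, -⟩, -⟩, hx, hy⟩
    exact ⟨⟨h0, hx⟩, hy⟩

theorem stmt12_general (p q : ℕ) (b : Fin (p + 1) → ℕ) :
    ∃ h : {z : (Fin (p + 1) → ℝ) × (Fin q → ℝ) //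
            (∀ i, 0 ≤ z.1 i) ∧ (∀ j, 0 ≤ z.2 j) ∧
              (∑ i, (b i : ℝ)) * z.1 0 + ∑ i : Fin p, (b i.succ : ℝ) * z.1 i.succ = 1} ≃ₜ
          {w : (Fin (p + 1) → ℝ) × (Fin q → ℝ) //
            (∀ i, 0 ≤ w.1 i) ∧ (∀ j, 0 ≤ w.2 j) ∧ (∑ i, (b i : ℝ) * w.1 i = 1) ∧
              (∀ i : Fin p, w.1 0 ≤ w.1 i.succ) ∧ ∀ j, w.1 0 ≤ w.2 j},
      ∀ z, ((h z).val.1 0 = z.val.1 0) ∧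
           (∀ i : Fin p, (h z).val.1 i.succ = z.val.1 i.succ + z.val.1 0) ∧
           ∀ j, (h z).val.2 j = z.val.2 j + z.val.1 0 := by
  refine ⟨headShear.subtype fun z => ?_, fun z => ⟨rfl, fun i => rfl, fun j => rfl⟩⟩
  have hsum : ∑ i, (b i : ℝ) * (headShear z).1 i =
      (∑ i, (b i : ℝ)) * z.1 0 + ∑ i : Fin p, (b i.succ : ℝ) * z.1 i.succ :=
    sum_mul_cons_add (fun i => (b i : ℝ)) _ _
  rw [hsum, ← and_assoc, headShear_nonneg_iff z]
  tauto

/-- Subdivision under blowup: with `b' = Σᵢ₌₀^p bᵢ`, the map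
`Φ(x₀,…,x_p,y) = (x₀, x₁+x₀, …, x_p+x₀, y₁+x₀, …, y_q+x₀)` restricts to a
homeomorphism from `{(x,y) ≥ 0 : b'x₀ + Σᵢ₌₁^p bᵢxᵢ = 1}` onto
`{(ξ,η) ≥ 0 : Σᵢ₌₀^p bᵢξᵢ = 1, ξ₀ ≤ ξᵢ (1 ≤ i ≤ p), ξ₀ ≤ ηⱼ}`. -/
theorem stmt12 (p q : ℕ) (b : Fin (p + 1) → ℕ) (hb : ∀ i, 0 < b i) :
    ∃ h : {z : (Fin (p + 1) → ℝ) × (Fin q → ℝ) //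
            (∀ i, 0 ≤ z.1 i) ∧ (∀ j, 0 ≤ z.2 j) ∧
              (∑ i, (b i : ℝ)) * z.1 0 + ∑ i : Fin p, (b i.succ : ℝ) * z.1 i.succ = 1} ≃ₜ
          {w : (Fin (p + 1) → ℝ) × (Fin q → ℝ) //
            (∀ i, 0 ≤ w.1 i) ∧ (∀ j, 0 ≤ w.2 j) ∧ (∑ i, (b i : ℝ) * w.1 i = 1) ∧
              (∀ i : Fin p, w.1 0 ≤ w.1 i.succ) ∧ ∀ j, w.1 0 ≤ w.2 j},
      ∀ z, ((h z).val.1 0 = z.val.1 0) ∧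
           (∀ i : Fin p, (h z).val.1 i.succ = z.val.1 i.succ + z.val.1 0) ∧
           ∀ j, (h z).val.2 j = z.val.2 j + z.val.1 0 :=
  stmt12_general p q b
end
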